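/- arXiv:1303.3981 — 2 statements merged into one kernel-verified Lean document; each statement's English description precedes it below -/
import Mathlib

section
/- Let f : (0,∞) → [0,∞] be measurable and let α, ζ, s be real numbers with α > 0 and ζ + s > 0. Then the Mellin transform of the Kober fractional integral operator of the second kind of order α with parameter ζ satisfies ∫_0^∞ u^{s−1} [ (u^{ζ}/Γ(α)) ∫_u^∞ v^{−ζ−α} (v−u)^{α−1} f(v) dv ] du = [Γ(ζ+s)/Γ(α+ζ+s)] · ∫_0^∞ v^{s−1} f(v) dv, the identity holding in [0,∞]. -/
/-!
By Tonelli, the order of integration over the region `0 < u < v` may be swapped. The inner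
integral over `u ∈ (0, v)` is then a scaled beta integral,
`∫₀ᵛ u^(ζ+s-1) (v-u)^(α-1) du = v^(ζ+s+α-1) B(ζ+s, α)`, and together with the factor
`v^(-ζ-α) / Γ(α)` it leaves `Γ(ζ+s) / Γ(α+ζ+s) · v^(s-1)` in front of `f v`.
-/

open MeasureTheory ENNReal Set ProbabilityTheory

theorem lintegral_Ioo_rpow_mul_one_sub_rpow {a b : ℝ} (ha : 0 < a) (hb : 0 < b) :
    ∫⁻ x in Ioo 0 1, ENNReal.ofReal (x ^ (a - 1) * (1 - x) ^ (b - 1)) =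
      ENNReal.ofReal (beta a b) := by
  have h := lintegral_betaPDF_eq_one ha hb
  simp_rw [lintegral_betaPDF, mul_assoc,
    ENNReal.ofReal_mul (one_div_nonneg.2 (beta_pos ha hb).le)] at h
  rw [lintegral_const_mul' _ _ ofReal_ne_top, one_div, ofReal_inv_of_pos (beta_pos ha hb),
    mul_comm] at h
  exact (ENNReal.eq_inv_of_mul_eq_one_left h).trans (inv_inv _)

theorem lintegral_Ioo_rpow_mul_sub_rpow {a b v : ℝ} (ha : 0 < a) (hb : 0 < b) (hv : 0 < v) :
    ∫⁻ u in Ioo 0 v, ENNReal.ofReal (u ^ (a - 1) * (v - u) ^ (b - 1)) =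
      ENNReal.ofReal (v ^ (a + b - 1) * beta a b) := by
  have himage : (v * ·) '' Ioo 0 1 = Ioo 0 v := by simp [image_mul_left_Ioo hv]
  rw [← himage, lintegral_image_eq_lintegral_abs_deriv_mul (f' := fun _ => v) measurableSet_Ioo
    (fun x _ => by simpa using ((hasDerivAt_id x).const_mul v).hasDerivWithinAt)
    (mul_right_injective₀ hv.ne').injOn, ENNReal.ofReal_mul (by positivity),
    ← lintegral_Ioo_rpow_mul_one_sub_rpow ha hb, ← lintegral_const_mul' _ _ ofReal_ne_top]
  refine setLIntegral_congr_fun measurableSet_Ioo fun x hx => ?_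
  have h1x : 0 ≤ 1 - x := by linarith [hx.2]
  rw [← ENNReal.ofReal_mul (abs_nonneg _), ← ENNReal.ofReal_mul (by positivity)]
  congr 1
  rw [abs_of_pos hv, show v - v * x = v * (1 - x) by ring,
    Real.mul_rpow hv.le hx.1.le, Real.mul_rpow hv.le h1x,
    show a + b - 1 = 1 + (a - 1) + (b - 1) by ring, Real.rpow_add hv, Real.rpow_add hv,
    Real.rpow_one]
  ring

theorem lintegral_Ioi_lintegral_Ioi_swap {α : Type*} [LinearOrder α] [TopologicalSpace α]
    [OrderClosedTopology α] [SecondCountableTopology α] [MeasurableSpace α]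
    [OpensMeasurableSpace α] (μ : Measure α) [SFinite μ] (a : α) {F : α → α → ℝ≥0∞}
    (hF : Measurable (Function.uncurry F)) :
    ∫⁻ u in Ioi a, ∫⁻ v in Ioi u, F u v ∂μ ∂μ = ∫⁻ v in Ioi a, ∫⁻ u in Ioo a v, F u v ∂μ ∂μ := by
  set G := {p : α × α | p.1 < p.2}.indicator (Function.uncurry F)
  have hG : Measurable G := hF.indicator (measurableSet_lt measurable_fst measurable_snd)
  have hleft : ∀ u ∈ Ioi a, ∫⁻ v in Ioi u, F u v ∂μ = ∫⁻ v in Ioi a, G (u, v) ∂μ := by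
    intro u hu
    have : (fun v => G (u, v)) = (Ioi u).indicator (F u) := by
      ext v; simp [G, indicator_apply]
    rw [this, lintegral_indicator measurableSet_Ioi, Measure.restrict_restrict measurableSet_Ioi,
      inter_eq_self_of_subset_left (Ioi_subset_Ioi (le_of_lt hu))]
  have hright : ∀ v ∈ Ioi a, ∫⁻ u in Ioo a v, F u v ∂μ = ∫⁻ u in Ioi a, G (u, v) ∂μ := by
    intro v _
    have : (fun u => G (u, v)) = (Iio v).indicator (F · v) := by
      ext u; simp [G, indicator_apply]
    rw [this, lintegral_indicator measurableSet_Iio, Measure.restrict_restrict measurableSet_Iio,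
      Iio_inter_Ioi]
  rw [setLIntegral_congr_fun measurableSet_Ioi hleft,
    setLIntegral_congr_fun measurableSet_Ioi hright]
  exact lintegral_lintegral_swap hG.aemeasurable

theorem lintegral_Ioo_mellin_kober_kernel {α ζ s v : ℝ} (hα : 0 < α) (hζs : 0 < ζ + s)
    (hv : 0 < v) :
    ∫⁻ u in Ioo 0 v, ENNReal.ofReal (u ^ (s - 1)) * ENNReal.ofReal (u ^ ζ / Real.Gamma α) *
        ENNReal.ofReal (v ^ (-ζ - α) * (v - u) ^ (α - 1)) =
      ENNReal.ofReal (Real.Gamma (ζ + s) / Real.Gamma (α + ζ + s) * v ^ (s - 1)) := by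
  have hintegrand : ∀ u ∈ Ioo 0 v,
      ENNReal.ofReal (u ^ (s - 1)) * ENNReal.ofReal (u ^ ζ / Real.Gamma α) *
        ENNReal.ofReal (v ^ (-ζ - α) * (v - u) ^ (α - 1)) =
      ENNReal.ofReal (v ^ (-ζ - α) / Real.Gamma α) *
        ENNReal.ofReal (u ^ ((ζ + s) - 1) * (v - u) ^ (α - 1)) := by
    rintro u ⟨hu, -⟩
    rw [← ENNReal.ofReal_mul (by positivity), ← ENNReal.ofReal_mul (by positivity),
      ← ENNReal.ofReal_mul (by positivity), show (ζ + s) - 1 = (s - 1) + ζ by ring,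
      Real.rpow_add hu]
    congr 1
    ring
  rw [setLIntegral_congr_fun measurableSet_Ioo hintegrand, lintegral_const_mul' _ _ ofReal_ne_top,
    lintegral_Ioo_rpow_mul_sub_rpow hζs hα hv, ← ENNReal.ofReal_mul (by positivity)]
  congr 1
  rw [beta, show s - 1 = (ζ + s + α - 1) + (-ζ - α) by ring, Real.rpow_add hv,
    show α + ζ + s = ζ + s + α by ring]
  field_simp

/-- Mellin transform of the Kober fractional integral operator of the second
kind of order `α` with parameter `ζ`:
`M{K^{ζ,α} f}(s) = [Γ(ζ+s)/Γ(α+ζ+s)] f*(s)`. -/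
theorem mellin_kober_second_kind (f : ℝ → ℝ≥0∞) (hf : Measurable f)
    (α ζ s : ℝ) (hα : 0 < α) (hζs : 0 < ζ + s) :
    ∫⁻ u in Set.Ioi (0 : ℝ), ENNReal.ofReal (u ^ (s - 1)) *
      (ENNReal.ofReal (u ^ ζ / Real.Gamma α) *
        ∫⁻ v in Set.Ioi u, ENNReal.ofReal (v ^ (-ζ - α) * (v - u) ^ (α - 1)) * f v) =
    ENNReal.ofReal (Real.Gamma (ζ + s) / Real.Gamma (α + ζ + s)) *
      ∫⁻ v in Set.Ioi (0 : ℝ), ENNReal.ofReal (v ^ (s - 1)) * f v := by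
  set K : ℝ → ℝ → ℝ≥0∞ := fun u v => ENNReal.ofReal (u ^ (s - 1)) *
    ENNReal.ofReal (u ^ ζ / Real.Gamma α) * ENNReal.ofReal (v ^ (-ζ - α) * (v - u) ^ (α - 1))
  have hK : Measurable (Function.uncurry K) := by
    unfold K Function.uncurry
    fun_prop
  calc _ = ∫⁻ u in Ioi 0, ∫⁻ v in Ioi u, K u v * f v := by
        simp_rw [K, mul_assoc, lintegral_const_mul' _ _ ofReal_ne_top]
    _ = ∫⁻ v in Ioi 0, ∫⁻ u in Ioo 0 v, K u v * f v :=
        lintegral_Ioi_lintegral_Ioi_swap volume 0 (hK.mul (hf.comp measurable_snd))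
    _ = ∫⁻ v in Ioi 0, ENNReal.ofReal (Real.Gamma (ζ + s) / Real.Gamma (α + ζ + s) *
          v ^ (s - 1)) * f v := by
        refine setLIntegral_congr_fun measurableSet_Ioi fun v hv => ?_
        rw [lintegral_mul_const'' _ hK.of_uncurry_right.aemeasurable,
          lintegral_Ioo_mellin_kober_kernel hα hζs hv]
    _ = _ := by
        have hΓ := Real.Gamma_pos_of_pos (show 0 < α + ζ + s by linarith)
        have hc : 0 ≤ Real.Gamma (ζ + s) / Real.Gamma (α + ζ + s) := by positivity
        simp_rw [ENNReal.ofReal_mul hc, mul_assoc]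
        rw [lintegral_const_mul' _ _ ofReal_ne_top]
end

section
/- Let ζ > −1 and α > 0 be real, let x₁ and x₂ be independent real random variables where x₁ has the type-1 beta density [Γ(ζ+1+α)/(Γ(ζ+1)Γ(α))] x^{ζ}(1−x)^{α−1} on (0,1) and x₂ has a probability density f supported on (0,∞). Then the product u = x₁x₂ has probability density g(u) = [Γ(ζ+1+α)/(Γ(ζ+1)Γ(α))] · u^{ζ} ∫_u^∞ v^{−ζ−α} (v−u)^{α−1} f(v) dv for u > 0; equivalently, the Kober fractional integral operator of the second kind applied to f, namely (u^{ζ}/Γ(α)) ∫_u^∞ v^{−ζ−α}(v−u)^{α−1} f(v) dv, equals [Γ(ζ+1)/Γ(ζ+1+α)] times the density of x₁x₂. -/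
/-! By independence, the law of `X₁ X₂` is the multiplicative convolution of the two laws. For
densities `k₁, k₂` on `ℝ`, the substitution `x = u / y` in the inner integral shows that this
convolution has density `u ↦ ∫ k₂(y) |y|⁻¹ k₁(u / y) dy`. For the beta density, `k₁(u / y)`
vanishes unless `0 < u < y`, and there
`y⁻¹ (u/y)^ζ (1 - u/y)^(α-1) = u^ζ y^(-ζ-α) (y-u)^(α-1)` is the kernel of the Kober operator. -/

open MeasureTheory ENNReal Set

theorem Real.map_mul_right_volume_withDensity {k : ℝ → ℝ≥0∞} (hk : Measurable k) {y : ℝ}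
    (hy : y ≠ 0) :
    (volume.withDensity k).map (· * y) =
      volume.withDensity fun u => ENNReal.ofReal |y|⁻¹ * k (u / y) := by
  ext s hs
  have hmul : Measurable (· * y : ℝ → ℝ) := measurable_mul_const y
  rw [Measure.map_apply hmul hs, withDensity_apply _ (hmul hs), withDensity_apply _ hs,
    lintegral_const_mul' _ _ ofReal_ne_top,
    ← abs_inv, ← smul_eq_mul, ← lintegral_smul_measure, ← Measure.restrict_smul,
    ← Real.map_volume_mul_right hy,
    setLIntegral_map (f := fun u => k (u / y)) hs (by fun_prop) hmul]
  simp only [mul_div_cancel_right₀ _ hy]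

theorem Real.withDensity_mconv_withDensity {k₁ k₂ : ℝ → ℝ≥0∞} (h₁ : Measurable k₁)
    (h₂ : Measurable k₂) :
    volume.withDensity k₁ ∗ₘ volume.withDensity k₂ =
      volume.withDensity fun u => ∫⁻ y, k₂ y * ENNReal.ofReal |y|⁻¹ * k₁ (u / y) := by
  ext s hs
  have hmul : Measurable fun p : ℝ × ℝ => p.1 * p.2 := measurable_fst.mul measurable_snd
  have hslice (y : ℝ) (hy : y ≠ 0) : volume.withDensity k₁ ((· * y) ⁻¹' s) =
      ∫⁻ u in s, ENNReal.ofReal |y|⁻¹ * k₁ (u / y) := by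
    rw [← Measure.map_apply (measurable_mul_const y) hs,
      Real.map_mul_right_volume_withDensity h₁ hy, withDensity_apply _ hs]
  calc (volume.withDensity k₁ ∗ₘ volume.withDensity k₂) s
      = ∫⁻ y, k₂ y * volume.withDensity k₁ ((· * y) ⁻¹' s) := by
        rw [Measure.mconv, Measure.map_apply hmul hs, Measure.prod_apply_symm (hmul hs),
          lintegral_withDensity_eq_lintegral_mul _ h₂
            (measurable_measure_prodMk_right (hmul hs))]
        rfl
    _ = ∫⁻ y, ∫⁻ u in s, k₂ y * ENNReal.ofReal |y|⁻¹ * k₁ (u / y) := by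
        refine lintegral_congr_ae ?_
        filter_upwards [Measure.ae_ne volume 0] with y hy
        simp_rw [hslice y hy, mul_assoc]
        exact (lintegral_const_mul _ (by fun_prop)).symm
    _ = _ := by
        rw [lintegral_lintegral_swap, withDensity_apply _ hs]
        fun_prop

theorem div_mem_Ioo_zero_one_iff {u y : ℝ} (hy : 0 < y) : u / y ∈ Ioo 0 1 ↔ 0 < u ∧ u < y := by
  rw [mem_Ioo, div_pos_iff_of_pos_right hy, div_lt_one hy]

theorem inv_mul_div_rpow_mul_one_sub_div_rpow (ζ α : ℝ) {u y : ℝ} (hu : 0 < u) (huy : u < y) :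
    y⁻¹ * ((u / y) ^ ζ * (1 - u / y) ^ (α - 1)) =
      u ^ ζ * (y ^ (-ζ - α) * (y - u) ^ (α - 1)) := by
  have hy : 0 < y := hu.trans huy
  have hsub : 1 - u / y = (y - u) / y := by field_simp
  have hpow : y ^ (-ζ - α) = (y ^ ζ)⁻¹ * ((y ^ (α - 1))⁻¹ * y⁻¹) := by
    rw [← Real.rpow_neg hy.le, ← Real.rpow_neg hy.le, ← Real.rpow_neg_one y,
      ← Real.rpow_add hy, ← Real.rpow_add hy]
    ring_nf
  rw [hsub, Real.div_rpow hu.le hy.le, Real.div_rpow (sub_pos.2 huy).le hy.le, hpow]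
  ring

theorem ofReal_mul_beta_div_eq (C ζ α : ℝ) {f : ℝ → ℝ} (hf_supp : ∀ y ≤ (0 : ℝ), f y = 0)
    (u y : ℝ) :
    ENNReal.ofReal (f y) * ENNReal.ofReal |y|⁻¹ *
        ENNReal.ofReal (if u / y ∈ Ioo 0 1 then C * (u / y) ^ ζ * (1 - u / y) ^ (α - 1) else 0) =
      if 0 < u then
        ENNReal.ofReal (C * u ^ ζ) *
          (Ioi u).indicator (fun v => ENNReal.ofReal (v ^ (-ζ - α) * (v - u) ^ (α - 1) * f v)) y
      else 0 := by
  rcases le_or_gt y 0 with hy | hy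
  · simp [hf_supp y hy]
  by_cases hmem : 0 < u ∧ u < y
  · rw [if_pos ((div_mem_Ioo_zero_one_iff hy).2 hmem), if_pos hmem.1,
      indicator_of_mem (mem_Ioi.2 hmem.2), abs_of_pos hy]
    obtain ⟨hu, huy⟩ := hmem
    have hab : 0 ≤ (u / y) ^ ζ * (1 - u / y) ^ (α - 1) :=
      mul_nonneg (Real.rpow_nonneg (div_pos hu hy).le _)
        (Real.rpow_nonneg (by rw [sub_nonneg, div_le_one hy]; exact huy.le) _)
    have hp : 0 ≤ y ^ (-ζ - α) * (y - u) ^ (α - 1) :=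
      mul_nonneg (Real.rpow_nonneg hy.le _) (Real.rpow_nonneg (sub_pos.2 huy).le _)
    calc ENNReal.ofReal (f y) * ENNReal.ofReal y⁻¹ *
          ENNReal.ofReal (C * (u / y) ^ ζ * (1 - u / y) ^ (α - 1))
        = ENNReal.ofReal C * ENNReal.ofReal (f y) *
            ENNReal.ofReal (y⁻¹ * ((u / y) ^ ζ * (1 - u / y) ^ (α - 1))) := by
          rw [mul_assoc C, ofReal_mul' hab, ofReal_mul (inv_nonneg.2 hy.le)]
          ring
      _ = ENNReal.ofReal C * ENNReal.ofReal (f y) *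
            (ENNReal.ofReal (u ^ ζ) * ENNReal.ofReal (y ^ (-ζ - α) * (y - u) ^ (α - 1))) := by
          rw [inv_mul_div_rpow_mul_one_sub_div_rpow ζ α hu huy,
            ofReal_mul (Real.rpow_nonneg hu.le _)]
      _ = _ := by
          rw [ofReal_mul' (Real.rpow_nonneg hu.le _), ofReal_mul hp]
          ring
  · rw [if_neg (mt (div_mem_Ioo_zero_one_iff hy).1 hmem), ofReal_zero, mul_zero]
    split_ifs with hu
    · rw [indicator_of_notMem (show y ∉ Ioi u from fun h => hmem ⟨hu, h⟩), mul_zero]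
    · rfl

theorem lintegral_ofReal_mul_beta_div (C ζ α : ℝ) {f : ℝ → ℝ} (hf_supp : ∀ y ≤ (0 : ℝ), f y = 0)
    (u : ℝ) :
    ∫⁻ y, ENNReal.ofReal (f y) * ENNReal.ofReal |y|⁻¹ *
        ENNReal.ofReal (if u / y ∈ Ioo 0 1 then C * (u / y) ^ ζ * (1 - u / y) ^ (α - 1) else 0) =
      if 0 < u then
        ENNReal.ofReal (C * u ^ ζ) *
          ∫⁻ v in Ioi u, ENNReal.ofReal (v ^ (-ζ - α) * (v - u) ^ (α - 1) * f v)
      else 0 := by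
  simp_rw [ofReal_mul_beta_div_eq C ζ α hf_supp u]
  split_ifs
  · rw [lintegral_const_mul' _ _ ofReal_ne_top, lintegral_indicator measurableSet_Ioi]
  · exact lintegral_zero

theorem kober_second_kind_is_density_of_product_general
    {Ω : Type} [MeasureSpace Ω] [IsProbabilityMeasure (volume : Measure Ω)]
    (ζ α : ℝ)
    (X₁ X₂ : Ω → ℝ) (hX₁ : Measurable X₁) (hX₂ : Measurable X₂)
    (hindep : ProbabilityTheory.IndepFun X₁ X₂ (volume : Measure Ω))
    (f : ℝ → ℝ) (hf_meas : Measurable f)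
    (hf_supp : ∀ x ≤ (0 : ℝ), f x = 0)
    (hX₁law : Measure.map X₁ (volume : Measure Ω) =
      volume.withDensity (fun x => ENNReal.ofReal
        (if x ∈ Set.Ioo (0 : ℝ) 1 then
          Real.Gamma (ζ + 1 + α) / (Real.Gamma (ζ + 1) * Real.Gamma α) *
            x ^ ζ * (1 - x) ^ (α - 1)
        else 0)))
    (hX₂law : Measure.map X₂ (volume : Measure Ω) =
      volume.withDensity (fun x => ENNReal.ofReal (f x))) :
    Measure.map (fun ω => X₁ ω * X₂ ω) (volume : Measure Ω) =
    volume.withDensity (fun u =>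
      if 0 < u then
        ENNReal.ofReal (Real.Gamma (ζ + 1 + α) / (Real.Gamma (ζ + 1) * Real.Gamma α) *
            u ^ ζ) *
          ∫⁻ v in Set.Ioi u,
            ENNReal.ofReal (v ^ (-ζ - α) * (v - u) ^ (α - 1) * f v)
      else 0) := by
  have hbeta : Measurable fun x : ℝ => ENNReal.ofReal
      (if x ∈ Ioo (0 : ℝ) 1 then
        Real.Gamma (ζ + 1 + α) / (Real.Gamma (ζ + 1) * Real.Gamma α) * x ^ ζ * (1 - x) ^ (α - 1)
      else 0) :=
    (Measurable.ite measurableSet_Ioo (by fun_prop) measurable_const).ennreal_ofReal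
  calc Measure.map (X₁ * X₂) volume
      = Measure.map X₁ volume ∗ₘ Measure.map X₂ volume :=
        hindep.map_mul_eq_map_mconv_map hX₁ hX₂
    _ = _ := by
        rw [hX₁law, hX₂law,
          Real.withDensity_mconv_withDensity hbeta hf_meas.ennreal_ofReal]
        simp_rw [lintegral_ofReal_mul_beta_div _ ζ α hf_supp]

/-- If `x₁` is type-1 beta with parameters `(ζ+1, α)` and `x₂` has density `f`
supported on `(0,∞)`, independent of `x₁`, then `u = x₁x₂` has density
`g(u) = [Γ(ζ+1+α)/(Γ(ζ+1)Γ(α))] u^ζ ∫ᵤ^∞ v^(−ζ−α)(v−u)^(α−1) f(v) dv` for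
`u > 0`; i.e. the Kober operator of the second kind applied to `f` is
`Γ(ζ+1)/Γ(ζ+1+α)` times the density of `x₁x₂`. -/
theorem kober_second_kind_is_density_of_product
    {Ω : Type} [MeasureSpace Ω] [IsProbabilityMeasure (volume : Measure Ω)]
    (ζ α : ℝ) (hζ : -1 < ζ) (hα : 0 < α)
    (X₁ X₂ : Ω → ℝ) (hX₁ : Measurable X₁) (hX₂ : Measurable X₂)
    (hindep : ProbabilityTheory.IndepFun X₁ X₂ (volume : Measure Ω))
    (f : ℝ → ℝ) (hf_meas : Measurable f) (hf_nonneg : ∀ x, 0 ≤ f x)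
    (hf_supp : ∀ x ≤ (0 : ℝ), f x = 0)
    (hX₁law : Measure.map X₁ (volume : Measure Ω) =
      volume.withDensity (fun x => ENNReal.ofReal
        (if x ∈ Set.Ioo (0 : ℝ) 1 then
          Real.Gamma (ζ + 1 + α) / (Real.Gamma (ζ + 1) * Real.Gamma α) *
            x ^ ζ * (1 - x) ^ (α - 1)
        else 0)))
    (hX₂law : Measure.map X₂ (volume : Measure Ω) =
      volume.withDensity (fun x => ENNReal.ofReal (f x))) :
    Measure.map (fun ω => X₁ ω * X₂ ω) (volume : Measure Ω) =
    volume.withDensity (fun u =>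
      if 0 < u then
        ENNReal.ofReal (Real.Gamma (ζ + 1 + α) / (Real.Gamma (ζ + 1) * Real.Gamma α) *
            u ^ ζ) *
          ∫⁻ v in Set.Ioi u,
            ENNReal.ofReal (v ^ (-ζ - α) * (v - u) ^ (α - 1) * f v)
      else 0) :=
  kober_second_kind_is_density_of_product_general ζ α X₁ X₂ hX₁ hX₂ hindep f hf_meas hf_supp hX₁law
    hX₂law
end
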